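/- Fix a smooth function φ : ℝ → ℝ supported in (2/3, 3). There is a constant C > 0, depending only on φ, such that for all X ≥ 1 and all W ∈ ℝ with 1/3 < W/X < 3, one has |H(X, 3W)| ≤ C X^{−1/2}. -/

import Mathlib

open MeasureTheory Set

/-- `e(x) = exp(2πix)`. -/
noncomputable def e2pi (x : ℝ) : ℂ := Complex.exp (2 * Real.pi * Complex.I * x)

/-- The integral `H(X, W) = ∫ ξ² φ(ξ³) e(−Xξ³ + Wξ) dξ` of Lemma 5.3 of the paper. -/
noncomputable def Hint (φ : ℝ → ℝ) (X W : ℝ) : ℂ :=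
  ∫ ξ : ℝ, (↑(ξ ^ 2 * φ (ξ ^ 3)) : ℂ) * e2pi (-X * ξ ^ 3 + W * ξ)

lemma norm_e2pi (t : ℝ) : ‖e2pi t‖ = 1 := by
  rw [e2pi, Complex.norm_exp]
  have : (2 * ↑Real.pi * Complex.I * (t:ℂ)).re = 0 := by simp [Complex.mul_re]
  rw [this, Real.exp_zero]

lemma continuous_e2pi : Continuous e2pi :=
  Complex.continuous_exp.comp (continuous_const.mul Complex.continuous_ofReal)

lemma hasDerivAt_e2pi_comp {f : ℝ → ℝ} {f' x : ℝ} (hf : HasDerivAt f f' x) :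
    HasDerivAt (fun y => e2pi (f y)) (e2pi (f x) * (2 * Real.pi * Complex.I * f')) x := by
  have h1 : HasDerivAt (fun y => ((f y : ℝ) : ℂ)) (f' : ℂ) x := hf.ofReal_comp
  have h2 : HasDerivAt (fun y => 2 * (Real.pi:ℂ) * Complex.I * ((f y : ℝ):ℂ))
      (2 * (Real.pi:ℂ) * Complex.I * (f':ℂ)) x := h1.const_mul _
  simpa [e2pi] using h2.cexp

set_option maxHeartbeats 1000000 in
lemma tail_bound (a : ℝ → ℝ) (ha : ContDiff ℝ (⊤ : ℕ∞) a)
    (haz : ∀ x, x ∉ Icc (4/5:ℝ) (3/2) → a x = 0)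
    (hdz : ∀ x, x ∉ Icc (4/5:ℝ) (3/2) → deriv a x = 0)
    (M₀ M₁ : ℝ) (hM₀ : ∀ x, |a x| ≤ M₀) (hM₁ : ∀ x, |deriv a x| ≤ M₁)
    (X W ξ₀ δ σ : ℝ) (hX : 1 ≤ X) (hδ : 0 < δ)
    (hW : W = X * ξ₀^2)
    (hξ₀l : 1/2 ≤ ξ₀) (hξ₀u : ξ₀ ≤ 7/4)
    (hσ : σ = 1 ∨ σ = -1)
    (α β : ℝ) (hαβ : α ≤ β) (hα0 : 0 < α)
    (hsep : ∀ ξ ∈ Icc α β, δ ≤ σ * (ξ - ξ₀)) :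
    ‖∫ ξ in α..β, (a ξ : ℂ) * e2pi (-X * ξ^3 + 3*W*ξ)‖ ≤ (4*M₀ + 2*M₁) / (X*δ) := by
  have hX0 : (0:ℝ) < X := lt_of_lt_of_le one_pos hX
  have hM₀0 : 0 ≤ M₀ := le_trans (abs_nonneg _) (hM₀ 0)
  have hM₁0 : 0 ≤ M₁ := le_trans (abs_nonneg _) (hM₁ 0)
  have hIcc : uIcc α β = Icc α β := uIcc_of_le hαβ
  -- separation facts
  have habs : ∀ ξ ∈ Icc α β, δ ≤ |ξ - ξ₀| := by
    intro ξ hξ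
    refine le_trans (hsep ξ hξ) ?_
    rcases hσ with h | h <;> subst h
    · rw [one_mul]; exact le_abs_self _
    · rw [neg_one_mul]; exact neg_le_abs _
  have hne : ∀ ξ ∈ Icc α β, ξ - ξ₀ ≠ 0 := by
    intro ξ hξ h0
    have h := habs ξ hξ; rw [h0] at h; simp at h; linarith
  have hplus : ∀ ξ ∈ Icc α β, 0 < ξ + ξ₀ := by
    intro ξ hξ; have := hξ.1; nlinarith
  set D : ℝ → ℂ := fun ξ => (2 * Real.pi * Complex.I) * ((3*W - 3*X*ξ^2 : ℝ) : ℂ) with hDdef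
  have hnormD : ∀ ξ, ‖D ξ‖ = 2 * Real.pi * (3*X*(|ξ - ξ₀| * |ξ + ξ₀|)) := by
    intro ξ
    have h1 : ‖D ξ‖ = 2 * |Real.pi| * 1 * |3*W - 3*X*ξ^2| := by
      simp only [hDdef, norm_mul, Complex.norm_real, Real.norm_eq_abs, Complex.norm_I,
        Complex.norm_two]
    have e1 : 3*W - 3*X*ξ^2 = (-(3*X)) * ((ξ-ξ₀)*(ξ+ξ₀)) := by rw [hW]; ring
    rw [h1, e1, abs_mul, abs_neg, abs_of_pos (show (0:ℝ) < 3*X by positivity), abs_mul,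
      abs_of_pos Real.pi_pos]
    ring
  have hnormD' : ∀ ξ ∈ Icc α β, ‖D ξ‖ = 2 * Real.pi * (3*X*(|ξ - ξ₀| * (ξ + ξ₀))) := by
    intro ξ hξ; rw [hnormD, abs_of_pos (hplus ξ hξ)]
  have hD0 : ∀ ξ ∈ Icc α β, D ξ ≠ 0 := by
    intro ξ hξ h0
    have h1 : ‖D ξ‖ = 0 := by rw [h0]; simp
    rw [hnormD' ξ hξ] at h1
    have h2 : (0:ℝ) < |ξ - ξ₀| := abs_pos.mpr (hne ξ hξ)
    have h3 := hplus ξ hξ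
    have h4 : (0:ℝ) < 2 * Real.pi * (3*X*(|ξ - ξ₀| * (ξ + ξ₀))) := by positivity
    linarith
  -- band bound for D from below when ξ is in the support band
  have hDband : ∀ ξ ∈ Icc α β, ξ ∈ Icc (4/5:ℝ) (3/2) → 6 * X * |ξ - ξ₀| ≤ ‖D ξ‖ := by
    intro ξ hξ hb
    rw [hnormD' ξ hξ]
    have h1 : (1:ℝ) ≤ ξ + ξ₀ := by have := hb.1; linarith
    have h2 : (0:ℝ) ≤ |ξ - ξ₀| := abs_nonneg _
    have h3 : (0:ℝ) ≤ X * |ξ - ξ₀| := by positivity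
    nlinarith [Real.pi_gt_three, mul_nonneg h3 (by linarith : (0:ℝ) ≤ ξ + ξ₀ - 1),
      mul_nonneg (mul_nonneg h3 (by linarith : (0:ℝ) ≤ ξ + ξ₀)) (by linarith [Real.pi_gt_three] : (0:ℝ) ≤ Real.pi - 3)]
  -- lower bound at general points of the interval (for boundary terms)
  have hDlow : ∀ ξ ∈ Icc α β, a ξ ≠ 0 → 6 * (X*δ) ≤ ‖D ξ‖ := by
    intro ξ hξ haξ
    have hb : ξ ∈ Icc (4/5:ℝ) (3/2) := by
      by_contra hc; exact haξ (haz ξ hc)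
    refine le_trans ?_ (hDband ξ hξ hb)
    have := habs ξ hξ
    nlinarith
  -- derivative setup
  set f : ℝ → ℝ := fun ξ => -X * ξ^3 + 3*W*ξ with hfdef
  set v : ℝ → ℂ := fun ξ => e2pi (f ξ) with hvdef
  set u : ℝ → ℂ := fun ξ => (a ξ : ℂ) / D ξ with hudef
  set D' : ℝ → ℂ := fun ξ => (2 * Real.pi * Complex.I) * ((-6*X*ξ : ℝ) : ℂ) with hD'def
  set u' : ℝ → ℂ := fun ξ =>
    ((↑(deriv a ξ) : ℂ) * D ξ - (↑(a ξ) : ℂ) * D' ξ) / (D ξ)^2 with hu'def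
  set v' : ℝ → ℂ := fun ξ => v ξ * D ξ with hv'def
  have hDcont : Continuous D :=
    continuous_const.mul (Complex.continuous_ofReal.comp (by fun_prop))
  have hD'cont : Continuous D' :=
    continuous_const.mul (Complex.continuous_ofReal.comp (by fun_prop))
  have hacont : Continuous a := ha.continuous
  have hdacont : Continuous (deriv a) := ha.continuous_deriv (by simp)
  have hfcont : Continuous f := by fun_prop
  have hvcont : Continuous v := continuous_e2pi.comp hfcont
  have hf' : ∀ ξ, HasDerivAt f (3*W - 3*X*ξ^2) ξ := by
    intro ξ
    have h1 : HasDerivAt (fun x : ℝ => -X * x^3) (-X * (3*ξ^2)) ξ := by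
      simpa using (hasDerivAt_pow 3 ξ).const_mul (-X)
    have h2 : HasDerivAt (fun x : ℝ => 3*W*x) (3*W) ξ := by
      simpa using (hasDerivAt_id ξ).const_mul (3*W)
    have h3 := h1.add h2
    have e : 3*W - 3*X*ξ^2 = -X * (3*ξ^2) + 3*W := by ring
    rw [e]; exact h3
  have hv' : ∀ ξ, HasDerivAt v (v' ξ) ξ := by
    intro ξ
    exact hasDerivAt_e2pi_comp (hf' ξ)
  have hDderiv : ∀ ξ, HasDerivAt D (D' ξ) ξ := by
    intro ξ
    have h1 : HasDerivAt (fun x : ℝ => 3*W - 3*X*x^2) (-6*X*ξ) ξ := by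
      have h2 : HasDerivAt (fun x : ℝ => 3*X*x^2) (3*X*(2*ξ)) ξ := by
        simpa using (hasDerivAt_pow 2 ξ).const_mul (3*X)
      have h3 := (hasDerivAt_const ξ (3*W)).sub h2
      exact h3.congr_deriv (by ring)
    exact (h1.ofReal_comp).const_mul _
  have hu' : ∀ ξ ∈ Icc α β, HasDerivAt u (u' ξ) ξ := by
    intro ξ hξ
    have h1 : HasDerivAt (fun x => ((a x : ℝ) : ℂ)) ((deriv a ξ : ℝ) : ℂ) ξ :=
      ((ha.differentiable (by simp) ξ).hasDerivAt).ofReal_comp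
    exact h1.div (hDderiv ξ) (hD0 ξ hξ)
  -- rewrite the integrand and integrate by parts
  have heq : EqOn (fun ξ => (↑(a ξ) : ℂ) * e2pi (-X * ξ^3 + 3*W*ξ)) (fun ξ => u ξ * v' ξ)
      (uIcc α β) := by
    intro ξ hξ
    rw [hIcc] at hξ
    simp only [hudef, hv'def, hvdef, hfdef]
    field_simp [hD0 ξ hξ]
  rw [intervalIntegral.integral_congr heq]
  have hu'cont : ContinuousOn u' (Icc α β) := by
    apply ContinuousOn.div
    · exact (((Complex.continuous_ofReal.comp hdacont).mul hDcont).sub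
        ((Complex.continuous_ofReal.comp hacont).mul hD'cont)).continuousOn
    · exact (hDcont.pow 2).continuousOn
    · exact fun x hx => pow_ne_zero _ (hD0 x hx)
  have hu'int : IntervalIntegrable u' volume α β := by
    apply ContinuousOn.intervalIntegrable
    rwa [hIcc]
  have hv'int : IntervalIntegrable v' volume α β :=
    (hvcont.mul hDcont).intervalIntegrable _ _
  rw [intervalIntegral.integral_mul_deriv_eq_deriv_mul
    (fun x hx => hu' x (hIcc ▸ hx)) (fun x _ => hv' x) hu'int hv'int]
  have hXδ : (0:ℝ) < X * δ := by positivity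
  -- boundary terms
  have hub : ∀ ξ ∈ Icc α β, ‖u ξ * v ξ‖ ≤ M₀ / (6*(X*δ)) := by
    intro ξ hξ
    rw [norm_mul, show ‖v ξ‖ = 1 from norm_e2pi _, mul_one]
    by_cases haξ : a ξ = 0
    · rw [hudef]
      simp only [haξ, Complex.ofReal_zero, zero_div, norm_zero]
      positivity
    · rw [hudef]
      simp only [norm_div, Complex.norm_real, Real.norm_eq_abs]
      exact div_le_div₀ hM₀0 (hM₀ ξ) (by positivity) (hDlow ξ hξ haξ)
  -- pointwise bound on u'
  have hu'norm : ∀ ξ ∈ Icc α β, ‖u' ξ * v ξ‖ ≤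
      ((2*M₀ + M₁) * X⁻¹) * (((ξ - ξ₀)^2)⁻¹) := by
    intro ξ hξ
    rw [norm_mul, show ‖v ξ‖ = 1 from norm_e2pi _, mul_one]
    by_cases hb : ξ ∈ Icc (4/5:ℝ) (3/2)
    · have hm : δ ≤ |ξ - ξ₀| := habs ξ hξ
      have hmpos : (0:ℝ) < |ξ - ξ₀| := lt_of_lt_of_le hδ hm
      have hm1 : |ξ - ξ₀| ≤ 1 := by
        rw [abs_le]; constructor
        · have := hb.1; linarith
        · have := hb.2; linarith
      have hNlow : 6 * X * |ξ - ξ₀| ≤ ‖D ξ‖ := hDband ξ hξ hb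
      have hNpos : (0:ℝ) < ‖D ξ‖ := lt_of_lt_of_le (by positivity) hNlow
      have hD'bd : ‖D' ξ‖ ≤ 72 * X := by
        have h1 : ‖D' ξ‖ = 2 * |Real.pi| * 1 * |(-6)*X*ξ| := by
          simp only [hD'def, norm_mul, Complex.norm_real, Real.norm_eq_abs, Complex.norm_I,
            Complex.norm_two, abs_mul]
        rw [h1, abs_of_pos Real.pi_pos]
        have hξpos : (0:ℝ) < ξ := lt_of_lt_of_le (by norm_num) hb.1
        have h2 : |(-6)*X*ξ| = 6*X*ξ := by
          rw [show (-6)*X*ξ = -(6*X*ξ) by ring, abs_neg,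
            abs_of_pos (by positivity)]
        rw [h2]
        linarith [mul_nonneg hX0.le (by linarith [hb.2] : (0:ℝ) ≤ 3/2 - ξ),
          mul_nonneg (mul_nonneg hX0.le hξpos.le)
            (by linarith [Real.pi_le_four] : (0:ℝ) ≤ 4 - Real.pi)]
      have hnum : ‖(↑(deriv a ξ) : ℂ) * D ξ - (↑(a ξ) : ℂ) * D' ξ‖ ≤
          M₁ * ‖D ξ‖ + M₀ * (72 * X) := by
        refine le_trans (norm_sub_le _ _) ?_
        have t1 : ‖(↑(deriv a ξ) : ℂ) * D ξ‖ ≤ M₁ * ‖D ξ‖ := by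
          rw [norm_mul, Complex.norm_real, Real.norm_eq_abs]
          exact mul_le_mul_of_nonneg_right (hM₁ ξ) (norm_nonneg _)
        have t2 : ‖(↑(a ξ) : ℂ) * D' ξ‖ ≤ M₀ * (72 * X) := by
          rw [norm_mul, Complex.norm_real, Real.norm_eq_abs]
          exact mul_le_mul (hM₀ ξ) hD'bd (norm_nonneg _) hM₀0
        linarith
      have hgoal : ‖u' ξ‖ = ‖(↑(deriv a ξ) : ℂ) * D ξ - (↑(a ξ) : ℂ) * D' ξ‖ / ‖D ξ‖^2 := by
        rw [hu'def]; rw [norm_div, norm_pow]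
      rw [hgoal]
      rw [div_le_iff₀ (by positivity)]
      set N := ‖D ξ‖
      set m := |ξ - ξ₀|
      have hsq : (ξ - ξ₀)^2 = m^2 := (sq_abs _).symm
      rw [hsq]
      have hXi : X⁻¹ * X = 1 := inv_mul_cancel₀ (ne_of_gt hX0)
      have hmi : (m^2)⁻¹ * m^2 = 1 := inv_mul_cancel₀ (by positivity)
      refine le_trans hnum ?_
      have key : (M₁ * N + M₀ * (72*X)) * (X * m^2) ≤ (2*M₀ + M₁) * N^2 := by
        have c0 : X * m^2 ≤ X * m := by
          nlinarith [mul_nonneg (mul_nonneg hX0.le hmpos.le) (by linarith : (0:ℝ) ≤ 1 - m)]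
        have c1 : X * m ≤ N / 6 := by linarith
        have c01 : X * m^2 ≤ N / 6 := c0.trans c1
        have claim1 : M₁ * (N * (X * m^2)) ≤ M₁ * (N * (N/6)) :=
          mul_le_mul_of_nonneg_left (mul_le_mul_of_nonneg_left c01 hNpos.le) hM₁0
        have hXm0 : (0:ℝ) ≤ X * m := (mul_pos hX0 hmpos).le
        have csq : (X*m)^2 ≤ (N/6)^2 := pow_le_pow_left₀ hXm0 c1 2
        have claim2 : 72 * M₀ * ((X*m)^2) ≤ 72 * M₀ * ((N/6)^2) :=
          mul_le_mul_of_nonneg_left csq (by positivity)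
        nlinarith [mul_nonneg hM₁0 (sq_nonneg N), claim1, claim2]
      calc M₁ * N + M₀ * (72*X)
          = (M₁ * N + M₀ * (72*X)) * ((X * m^2) * (X * m^2)⁻¹) := by
            rw [mul_inv_cancel₀ (by positivity : (X : ℝ) * m^2 ≠ 0), mul_one]
        _ = ((M₁ * N + M₀ * (72*X)) * (X * m^2)) * (X * m^2)⁻¹ := by ring
        _ ≤ ((2*M₀ + M₁) * N^2) * (X * m^2)⁻¹ := by
            apply mul_le_mul_of_nonneg_right key (by positivity)
        _ = (2*M₀ + M₁) * X⁻¹ * (m^2)⁻¹ * N^2 := by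
            rw [mul_inv]; ring
    · have h1 : a ξ = 0 := haz ξ hb
      have h2 : deriv a ξ = 0 := hdz ξ hb
      rw [hu'def]
      simp only [h1, h2, Complex.ofReal_zero, zero_mul, sub_zero, zero_div, norm_zero]
      positivity
  -- the integral of the bound
  have hanti : ∀ ξ ∈ uIcc α β, HasDerivAt (fun x => -(x - ξ₀)⁻¹) (((ξ - ξ₀)^2)⁻¹) ξ := by
    intro ξ hξ
    rw [hIcc] at hξ
    have h1 : HasDerivAt (fun x : ℝ => x - ξ₀) 1 ξ := (hasDerivAt_id ξ).sub_const ξ₀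
    have h2 := (h1.inv (hne ξ hξ)).neg
    refine h2.congr_deriv ?_
    ring
  have hint2 : IntervalIntegrable (fun ξ => ((ξ - ξ₀)^2)⁻¹) volume α β := by
    apply ContinuousOn.intervalIntegrable
    rw [hIcc]
    exact ContinuousOn.inv₀ (by fun_prop) (fun x hx => pow_ne_zero _ (hne x hx))
  have hval : ∫ ξ in α..β, ((ξ - ξ₀)^2)⁻¹ = (α - ξ₀)⁻¹ - (β - ξ₀)⁻¹ := by
    rw [intervalIntegral.integral_eq_sub_of_hasDerivAt hanti hint2]
    ring
  have hvalle : (α - ξ₀)⁻¹ - (β - ξ₀)⁻¹ ≤ δ⁻¹ := by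
    have hαm := hsep α ⟨le_refl α, hαβ⟩
    have hβm := hsep β ⟨hαβ, le_refl β⟩
    rcases hσ with h | h <;> subst h
    · rw [one_mul] at hαm hβm
      have h1 : (α - ξ₀)⁻¹ ≤ δ⁻¹ := inv_anti₀ hδ hαm
      have h2 : (0:ℝ) < (β - ξ₀)⁻¹ := inv_pos.mpr (lt_of_lt_of_le hδ hβm)
      linarith
    · rw [neg_one_mul] at hαm hβm
      have h1 : (α - ξ₀)⁻¹ < 0 := inv_neg''.mpr (by linarith)
      have h2 : (ξ₀ - β)⁻¹ ≤ δ⁻¹ := inv_anti₀ hδ (by linarith)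
      have h3 : -(β - ξ₀)⁻¹ = (ξ₀ - β)⁻¹ := by
        rw [show ξ₀ - β = -(β - ξ₀) by ring, inv_neg]
      linarith
  -- assemble
  have hnormcont : ContinuousOn (fun ξ => ‖u' ξ * v ξ‖) (Icc α β) :=
    (hu'cont.mul hvcont.continuousOn).norm
  have hnormint : IntervalIntegrable (fun ξ => ‖u' ξ * v ξ‖) volume α β := by
    apply ContinuousOn.intervalIntegrable; rwa [hIcc]
  have hGint : IntervalIntegrable (fun ξ => ((2*M₀ + M₁) * X⁻¹) * (((ξ - ξ₀)^2)⁻¹)) volume α β :=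
    hint2.const_mul _
  have hIbound : ‖∫ ξ in α..β, u' ξ * v ξ‖ ≤ ((2*M₀ + M₁) * X⁻¹) * δ⁻¹ := by
    calc ‖∫ ξ in α..β, u' ξ * v ξ‖ ≤ ∫ ξ in α..β, ‖u' ξ * v ξ‖ :=
          intervalIntegral.norm_integral_le_integral_norm hαβ
      _ ≤ ∫ ξ in α..β, ((2*M₀ + M₁) * X⁻¹) * (((ξ - ξ₀)^2)⁻¹) :=
          intervalIntegral.integral_mono_on hαβ hnormint hGint hu'norm
      _ = ((2*M₀ + M₁) * X⁻¹) * ∫ ξ in α..β, ((ξ - ξ₀)^2)⁻¹ :=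
          intervalIntegral.integral_const_mul _ _
      _ ≤ ((2*M₀ + M₁) * X⁻¹) * δ⁻¹ := by
          rw [hval]
          exact mul_le_mul_of_nonneg_left hvalle (by positivity)
  have hbα := hub α ⟨le_refl α, hαβ⟩
  have hbβ := hub β ⟨hαβ, le_refl β⟩
  refine le_trans (norm_sub_le _ _) (le_trans (add_le_add (norm_sub_le _ _) le_rfl) ?_)
  have hP : (0:ℝ) ≤ (X*δ)⁻¹ := by positivity
  have e1 : M₀ / (6*(X*δ)) = (M₀/6) * (X*δ)⁻¹ := by
    rw [div_eq_mul_inv, mul_inv]; ring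
  have e2 : ((2*M₀ + M₁) * X⁻¹) * δ⁻¹ = (2*M₀ + M₁) * (X*δ)⁻¹ := by
    rw [mul_inv]; ring
  have e3 : (4*M₀ + 2*M₁) / (X*δ) = (4*M₀ + 2*M₁) * (X*δ)⁻¹ := div_eq_mul_inv _ _
  rw [e3]
  rw [e1] at hbα hbβ
  rw [e2] at hIbound
  nlinarith [mul_nonneg hM₀0 hP, mul_nonneg hM₁0 hP]

set_option maxHeartbeats 1000000 in
/-- Square-root cancellation bound implicit in the stationary-phase evaluation of
part (2) of Lemma 5.3 of the paper. -/
theorem Hint_stationary_bound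
    (φ : ℝ → ℝ) (hφ : ContDiff ℝ (⊤ : ℕ∞) φ)
    (hsupp : Function.support φ ⊆ Ioo (2 / 3 : ℝ) 3) :
    ∃ C : ℝ, 0 < C ∧
      ∀ X : ℝ, 1 ≤ X →
        ∀ W : ℝ, 1 / 3 < W / X → W / X < 3 →
          ‖Hint φ X (3 * W)‖ ≤ C * X ^ (-(1 : ℝ) / 2) := by
  set a : ℝ → ℝ := fun ξ => ξ ^ 2 * φ (ξ ^ 3) with hadef
  have ha : ContDiff ℝ (⊤ : ℕ∞) a :=
    (contDiff_id.pow 2).mul (hφ.comp (contDiff_id.pow 3))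
  have hsupp' : ∀ x, a x ≠ 0 → 4/5 < x ∧ x < 3/2 := by
    intro x hx
    have h1 : φ (x ^ 3) ≠ 0 := by
      intro h; exact hx (by simp [hadef, h])
    have h2 : x ^ 3 ∈ Ioo (2/3 : ℝ) 3 := hsupp h1
    have hx0 : 0 < x := by
      by_contra h; push_neg at h
      have h3 : x ^ 3 = x * x^2 := by ring
      nlinarith [sq_nonneg x, h2.1]
    constructor
    · by_contra h; push_neg at h
      have h4 : x ^ 3 ≤ (4/5:ℝ)^3 := pow_le_pow_left₀ hx0.le h 3
      have := h2.1; norm_num at h4 ⊢; linarith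
    · by_contra h; push_neg at h
      have h4 : (3/2:ℝ)^3 ≤ x ^ 3 := pow_le_pow_left₀ (by norm_num) h 3
      have := h2.2; norm_num at h4 ⊢; linarith
  have haz : ∀ x, x ∉ Icc (4/5:ℝ) (3/2) → a x = 0 := by
    intro x hx; by_contra h
    obtain ⟨h1, h2⟩ := hsupp' x h
    exact hx ⟨h1.le, h2.le⟩
  have hdz : ∀ x, x ∉ Icc (4/5:ℝ) (3/2) → deriv a x = 0 := by
    intro x hx
    have hopen : IsOpen (Icc (4/5:ℝ) (3/2))ᶜ := isClosed_Icc.isOpen_compl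
    have hev : a =ᶠ[nhds x] (fun _ => 0) := by
      filter_upwards [hopen.mem_nhds hx] with y hy using haz y hy
    rw [hev.deriv_eq]; simp
  obtain ⟨C₀, hC₀⟩ := (isCompact_Icc (a := (4/5:ℝ)) (b := 3/2)).exists_bound_of_continuousOn
    ha.continuous.continuousOn
  obtain ⟨C₁, hC₁⟩ := (isCompact_Icc (a := (4/5:ℝ)) (b := 3/2)).exists_bound_of_continuousOn
    (ha.continuous_deriv (by simp)).continuousOn
  set M₀ := max C₀ 0 with hM₀def
  set M₁ := max C₁ 0 with hM₁def
  have hM₀ : ∀ x, |a x| ≤ M₀ := by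
    intro x
    by_cases hx : x ∈ Icc (4/5:ℝ) (3/2)
    · exact le_trans (by simpa [Real.norm_eq_abs] using hC₀ x hx) (le_max_left _ _)
    · rw [haz x hx, abs_zero, hM₀def]; exact le_max_right _ _
  have hM₁ : ∀ x, |deriv a x| ≤ M₁ := by
    intro x
    by_cases hx : x ∈ Icc (4/5:ℝ) (3/2)
    · exact le_trans (by simpa [Real.norm_eq_abs] using hC₁ x hx) (le_max_left _ _)
    · rw [hdz x hx, abs_zero, hM₁def]; exact le_max_right _ _
  have hM₀0 : 0 ≤ M₀ := le_max_right _ _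
  have hM₁0 : 0 ≤ M₁ := le_max_right _ _
  refine ⟨10*(M₀+M₁)+10, by positivity, ?_⟩
  intro X hX W h1 h2
  have hX0 : (0:ℝ) < X := lt_of_lt_of_le one_pos hX
  have hWX0 : 0 < W / X := lt_trans (by norm_num) h1
  set ξ₀ := Real.sqrt (W/X) with hξ₀def
  have hξ₀sq : ξ₀ ^ 2 = W / X := Real.sq_sqrt hWX0.le
  have hξ₀0 : 0 ≤ ξ₀ := Real.sqrt_nonneg _
  have hW : W = X * ξ₀ ^ 2 := by rw [hξ₀sq]; field_simp
  have hξ₀l : 1/2 ≤ ξ₀ := by nlinarith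
  have hξ₀u : ξ₀ ≤ 7/4 := by nlinarith
  set s := Real.sqrt X with hsdef
  have hss : s * s = X := Real.mul_self_sqrt hX0.le
  have hs0 : 0 < s := Real.sqrt_pos.mpr hX0
  have hs1 : 1 ≤ s := by nlinarith
  set δ := s⁻¹ with hδdef
  have hδ0 : 0 < δ := inv_pos.mpr hs0
  have hδ1 : δ ≤ 1 := by rw [hδdef]; exact inv_le_one_of_one_le₀ hs1
  have hXδ : X * δ = s := by
    rw [hδdef, mul_comm, inv_mul_eq_div, div_eq_iff hs0.ne']
    exact hss.symm
  have hrw : X ^ (-(1:ℝ)/2) = δ := by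
    rw [show (-(1:ℝ)/2) = -(1/2 : ℝ) by norm_num, Real.rpow_neg hX0.le, hδdef, hsdef,
      Real.sqrt_eq_rpow]
  set A := ξ₀ - δ with hAdef
  set B := ξ₀ + δ with hBdef
  set L := min A (4/5) with hLdef
  set R := max B (3/2) with hRdef
  have hLA : L ≤ A := min_le_left _ _
  have hAB : A ≤ B := by rw [hAdef, hBdef]; linarith
  have hBR : B ≤ R := le_max_left _ _
  set F : ℝ → ℂ := fun ξ => (↑(a ξ) : ℂ) * e2pi (-X * ξ^3 + 3*W*ξ) with hFdef
  have hFsupp : Function.support F ⊆ Ioc L R := by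
    intro x hx
    have hax : a x ≠ 0 := by
      intro h; apply hx; simp [hFdef, h]
    obtain ⟨hx1, hx2⟩ := hsupp' x hax
    constructor
    · exact lt_of_le_of_lt (min_le_right A (4/5)) hx1
    · exact hx2.le.trans (le_max_right B (3/2))
  have hHeq : Hint φ X (3*W) = ∫ ξ in L..R, F ξ :=
    (intervalIntegral.integral_eq_integral_of_support_subset hFsupp).symm
  have hcont : Continuous F :=
    (Complex.continuous_ofReal.comp ha.continuous).mul (continuous_e2pi.comp (by fun_prop))
  have hint : ∀ p q : ℝ, IntervalIntegrable F volume p q := fun p q =>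
    hcont.intervalIntegrable p q
  have hsplit : ∫ ξ in L..R, F ξ =
      (∫ ξ in L..A, F ξ) + ((∫ ξ in A..B, F ξ) + (∫ ξ in B..R, F ξ)) := by
    rw [intervalIntegral.integral_add_adjacent_intervals (hint A B) (hint B R),
      intervalIntegral.integral_add_adjacent_intervals (hint L A) (hint A R)]
  have hmid : ‖∫ ξ in A..B, F ξ‖ ≤ M₀ * (2*δ) := by
    have hb : ∀ x ∈ Set.uIoc A B, ‖F x‖ ≤ M₀ := by
      intro x _
      rw [hFdef]
      simp only [norm_mul, Complex.norm_real, Real.norm_eq_abs, norm_e2pi, mul_one]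
      exact hM₀ x
    refine le_trans (intervalIntegral.norm_integral_le_of_norm_le_const hb) ?_
    rw [show B - A = 2*δ by rw [hAdef, hBdef]; ring, abs_of_nonneg (by linarith)]
  have hleft : ‖∫ ξ in L..A, F ξ‖ ≤ (4*M₀ + 2*M₁) / (X*δ) := by
    rcases le_or_gt A (4/5) with h | h
    · rw [hLdef, min_eq_left h, intervalIntegral.integral_same, norm_zero]
      positivity
    · rw [hLdef, min_eq_right h.le]
      exact tail_bound a ha haz hdz M₀ M₁ hM₀ hM₁ X W ξ₀ δ (-1) hX hδ0 hW hξ₀l hξ₀u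
        (Or.inr rfl) (4/5) A h.le (by norm_num)
        (fun ξ hξ => by have := hξ.2; rw [hAdef] at this; linarith [neg_one_mul (ξ - ξ₀)])
  have hright : ‖∫ ξ in B..R, F ξ‖ ≤ (4*M₀ + 2*M₁) / (X*δ) := by
    exact tail_bound a ha haz hdz M₀ M₁ hM₀ hM₁ X W ξ₀ δ 1 hX hδ0 hW hξ₀l hξ₀u
      (Or.inl rfl) B R hBR (by rw [hBdef]; linarith)
      (fun ξ hξ => by have := hξ.1; rw [hBdef] at this; linarith [one_mul (ξ - ξ₀)])
  have hdiv : (4*M₀ + 2*M₁) / (X*δ) = (4*M₀ + 2*M₁) * δ := by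
    rw [hXδ, div_eq_mul_inv, ← hδdef]
  rw [hrw, hHeq, hsplit]
  refine le_trans (norm_add_le _ _) (le_trans (add_le_add le_rfl (norm_add_le _ _)) ?_)
  rw [hdiv] at hleft hright
  nlinarith [mul_nonneg hM₀0 hδ0.le, mul_nonneg hM₁0 hδ0.le, hδ0.le, hleft, hright, hmid]
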